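/- arXiv:2304.01283 — 2 statements merged into one kernel-verified Lean document; each statement's English description precedes it below -/
import Mathlib

section
/- Soundness of S5BKE with respect to algebraic semantics: for every set of formulas Φ and every formula φ, if Φ ⊢ φ in the calculus S5BKE, then Φ ⊨ φ, i.e. every interpretation (M,γ) satisfying all formulas of Φ also satisfies φ. -/
/-- Formulas of S5BKE over variables `x_n`, with primitive `¬`, `→`, `□`, `K`, `B`. -/
inductive Fm : Type
  | var : ℕ → Fm
  | neg : Fm → Fm
  | imp : Fm → Fm → Fm
  | box : Fm → Fm
  | K : Fm → Fm
  | B : Fm → Fm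
  deriving DecidableEq

/-- `⊤` defined as usual. -/
def fmTop : Fm := Fm.imp (Fm.var 0) (Fm.var 0)
/-- `⊥` defined as usual. -/
def fmBot : Fm := Fm.neg fmTop
/-- Conjunction, defined from `¬, →`. -/
def fmAnd (φ ψ : Fm) : Fm := Fm.neg (Fm.imp φ (Fm.neg ψ))
/-- Biconditional, defined as usual. -/
def fmIff (φ ψ : Fm) : Fm := fmAnd (Fm.imp φ ψ) (Fm.imp ψ φ)
/-- Propositional identity `φ ≡ ψ := □(φ ↔ ψ)`. -/
def fmEquiv (φ ψ : Fm) : Fm := Fm.box (fmIff φ ψ)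

/-- Boolean evaluation treating variables and modal formulas as atoms. -/
def evalB (v : Fm → Bool) : Fm → Bool
  | Fm.neg φ => !evalB v φ
  | Fm.imp φ ψ => !evalB v φ || evalB v ψ
  | φ => v φ

/-- `φ` has the form of a classical tautology. -/
def IsTaut (φ : Fm) : Prop := ∀ v : Fm → Bool, evalB v φ = true

/-- The axioms of S5BKE. -/
inductive Ax : Fm → Prop
  | taut {φ} : IsTaut φ → Ax φ
  | kRefl (φ) : Ax (Fm.imp (Fm.K φ) φ)
  | kB (φ) : Ax (Fm.imp (Fm.K φ) (Fm.B φ))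
  | box4 (φ) : Ax (Fm.imp (Fm.box φ) (Fm.box (Fm.box φ)))
  | box5 (φ) : Ax (Fm.imp (Fm.neg (Fm.box φ)) (Fm.box (Fm.neg (Fm.box φ))))
  | boxK (φ) : Ax (Fm.imp (Fm.box φ) (Fm.K φ))
  | kDist (φ ψ) : Ax (Fm.imp (Fm.K (Fm.imp φ ψ)) (Fm.imp (Fm.K φ) (Fm.K ψ)))
  | bDist (φ ψ) : Ax (Fm.imp (Fm.B (Fm.imp φ ψ)) (Fm.imp (Fm.B φ) (Fm.B ψ)))
  | boxDist (φ ψ) : Ax (Fm.imp (Fm.box (Fm.imp φ ψ)) (Fm.imp (Fm.box φ) (Fm.box ψ)))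
  | consB : Ax (Fm.neg (Fm.B fmBot))

/-- Derivability in S5BKE: hypotheses, axioms, modus ponens, axiom necessitation. -/
inductive Deriv (Φ : Set Fm) : Fm → Prop
  | hyp {φ} : φ ∈ Φ → Deriv Φ φ
  | ax {φ} : Ax φ → Deriv Φ φ
  | mp {φ ψ} : Deriv Φ (Fm.imp φ ψ) → Deriv Φ φ → Deriv Φ ψ
  | nec {φ} : Ax φ → Deriv Φ (Fm.box φ)

def Consistent (Φ : Set Fm) : Prop := ¬ Deriv Φ fmBot

def MaxConsistent (Γ : Set Fm) : Prop :=
  Consistent Γ ∧ ∀ Δ : Set Fm, Γ ⊂ Δ → ¬ Consistent Δ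
/-- A filter on a Boolean algebra: nonempty, upward closed, closed under meets. -/
def IsBAFilter {M : Type*} [BooleanAlgebra M] (F : Set M) : Prop :=
  F.Nonempty ∧ (∀ a b : M, a ∈ F → a ≤ b → b ∈ F) ∧ (∀ a b : M, a ∈ F → b ∈ F → a ⊓ b ∈ F)

/-- An ultrafilter on a Boolean algebra: a proper filter containing `a` or `aᶜ` for each `a`. -/
def IsBAUltrafilter {M : Type*} [BooleanAlgebra M] (U : Set M) : Prop :=
  IsBAFilter U ∧ ⊥ ∉ U ∧ ∀ a : M, a ∈ U ∨ aᶜ ∈ U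

/-- An algebraic model of S5BKE on the Boolean algebra `M`. -/
structure AlgModel (M : Type) [BooleanAlgebra M] where
  box : M → M
  opK : M → M
  opB : M → M
  TRUE : Set M
  true_ultra : IsBAUltrafilter TRUE
  box_eq_top : ∀ a : M, a = ⊤ → box a = ⊤
  box_eq_bot : ∀ a : M, a ≠ ⊤ → box a = ⊥
  know_bel : ∀ U : Set M, IsBAUltrafilter U →
    IsBAFilter {a : M | opK a ∈ U} ∧ ⊥ ∉ {a : M | opK a ∈ U} ∧
    IsBAFilter {a : M | opB a ∈ U} ∧ ⊥ ∉ {a : M | opB a ∈ U} ∧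
    {a : M | opK a ∈ U} ⊆ U ∩ {a : M | opB a ∈ U}

/-- Canonical extension of an assignment `γ : V → M` to all formulas. -/
def AlgModel.eval {M : Type} [BooleanAlgebra M] (𝕄 : AlgModel M) (γ : ℕ → M) : Fm → M
  | Fm.var n => γ n
  | Fm.neg φ => (𝕄.eval γ φ)ᶜ
  | Fm.imp φ ψ => (𝕄.eval γ φ)ᶜ ⊔ 𝕄.eval γ ψ
  | Fm.box φ => 𝕄.box (𝕄.eval γ φ)
  | Fm.K φ => 𝕄.opK (𝕄.eval γ φ)
  | Fm.B φ => 𝕄.opB (𝕄.eval γ φ)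

/-- `(M,γ) ⊨ φ` iff `γ(φ) ∈ TRUE`. -/
def Sat {M : Type} [BooleanAlgebra M] (𝕄 : AlgModel M) (γ : ℕ → M) (φ : Fm) : Prop :=
  𝕄.eval γ φ ∈ 𝕄.TRUE

/-- Algebraic logical consequence. -/
def Entails (Φ : Set Fm) (φ : Fm) : Prop :=
  ∀ (M : Type) [BooleanAlgebra M] (𝕄 : AlgModel M) (γ : ℕ → M),
    (∀ ψ ∈ Φ, Sat 𝕄 γ ψ) → Sat 𝕄 γ φ


section Soundness

variable {M : Type} [BooleanAlgebra M]

lemma uf_top {U : Set M} (hU : IsBAUltrafilter U) : (⊤ : M) ∈ U := by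
  obtain ⟨⟨⟨a, ha⟩, hup, _⟩, _, _⟩ := hU
  exact hup a ⊤ ha le_top

lemma uf_compl_iff {U : Set M} (hU : IsBAUltrafilter U) (a : M) : aᶜ ∈ U ↔ a ∉ U := by
  obtain ⟨⟨_, hup, hinf⟩, hbot, halt⟩ := hU
  constructor
  · intro hc ha
    exact hbot (by simpa using hinf a aᶜ ha hc)
  · intro ha
    rcases halt a with h | h
    · exact absurd h ha
    · exact h

lemma uf_sup_iff {U : Set M} (hU : IsBAUltrafilter U) (a b : M) :
    a ⊔ b ∈ U ↔ a ∈ U ∨ b ∈ U := by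
  obtain ⟨⟨_, hup, hinf⟩, hbot, halt⟩ := hU
  constructor
  · intro hs
    by_contra hcon
    push_neg at hcon
    have ha := (uf_compl_iff ⟨⟨‹_›, hup, hinf⟩, hbot, halt⟩ a).2 hcon.1
    have hb := (uf_compl_iff ⟨⟨‹_›, hup, hinf⟩, hbot, halt⟩ b).2 hcon.2
    have hmem := hinf _ _ hs (hinf _ _ ha hb)
    rw [← compl_sup, inf_compl_eq_bot] at hmem
    exact hbot hmem
  · rintro (h | h)
    · exact hup a _ h le_sup_left
    · exact hup b _ h le_sup_right

lemma uf_mp {U : Set M} (hU : IsBAUltrafilter U) {a b : M}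
    (h1 : aᶜ ⊔ b ∈ U) (h2 : a ∈ U) : b ∈ U := by
  rcases (uf_sup_iff hU _ _).1 h1 with h | h
  · exact absurd h2 ((uf_compl_iff hU a).1 h)
  · exact h

open Order in
lemma exists_uf_not_mem {a : M} (ha : a ≠ ⊤) :
    ∃ U : Set M, IsBAUltrafilter U ∧ a ∉ U := by
  have hdisj : Disjoint ((PFilter.principal (⊤ : M)) : Set M)
      ((Ideal.principal a) : Set M) := by
    rw [Set.disjoint_left]
    intro x hx hx'
    have hx1 : (⊤ : M) ≤ x := hx
    have hx2 : x ≤ a := hx'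
    exact ha (top_le_iff.1 (hx1.trans hx2))
  obtain ⟨J, hJprime, hIJ, hJdisj⟩ :=
    DistribLattice.prime_ideal_of_disjoint_filter_ideal hdisj
  refine ⟨(J : Set M)ᶜ, ⟨⟨⟨⊤, ?_⟩, ?_, ?_⟩, ?_, ?_⟩, ?_⟩
  · exact Set.disjoint_left.1 hJdisj (le_refl (⊤ : M))
  · intro x y hx hxy hy
    exact hx (J.lower hxy hy)
  · intro x y hx hy hxy
    rcases hJprime.mem_or_mem hxy with h | h
    · exact hx h
    · exact hy h
  · intro hbot
    exact hbot J.bot_mem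
  · intro x
    by_contra hcon
    push_neg at hcon
    have hx : x ∈ (J : Set M) := not_not.1 hcon.1
    have hxc : xᶜ ∈ (J : Set M) := not_not.1 hcon.2
    have : x ⊔ xᶜ ∈ J := J.sup_mem hx hxc
    rw [sup_compl_eq_top] at this
    exact Set.disjoint_left.1 hJdisj (le_refl (⊤ : M)) this
  · intro hmem
    exact hmem (hIJ (le_refl a))

lemma eq_top_of_forall_uf {a : M}
    (h : ∀ U : Set M, IsBAUltrafilter U → a ∈ U) : a = ⊤ := by
  by_contra hne
  obtain ⟨U, hU, haU⟩ := exists_uf_not_mem hne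
  exact haU (h U hU)

open Classical in
lemma eval_taut_mem {φ : Fm} (ht : IsTaut φ) (𝕄 : AlgModel M) (γ : ℕ → M)
    {U : Set M} (hU : IsBAUltrafilter U) : 𝕄.eval γ φ ∈ U := by
  classical
  set v : Fm → Bool := fun ψ => decide (𝕄.eval γ ψ ∈ U) with hv
  have key : ∀ ψ : Fm, evalB v ψ = true ↔ 𝕄.eval γ ψ ∈ U := by
    intro ψ
    induction ψ with
    | var n => simp [evalB, hv, AlgModel.eval]; exact decide_eq_true_iff
    | neg ψ ih =>
        simp only [evalB, Bool.not_eq_true', AlgModel.eval, uf_compl_iff hU]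
        rw [← Bool.not_eq_true] at *
        tauto
    | imp ψ χ ih1 ih2 =>
        simp only [evalB, AlgModel.eval, uf_sup_iff hU, uf_compl_iff hU,
          Bool.or_eq_true, Bool.not_eq_true'] at *
        constructor
        · rintro (h | h)
          · left; rw [← ih1]; simp [h]
          · right; exact ih2.1 h
        · rintro (h | h)
          · left; rw [← Bool.not_eq_true] at *; tauto
          · right; exact ih2.2 h
    | box ψ ih => simp [evalB, hv]
    | K ψ ih => simp [evalB, hv]
    | B ψ ih => simp [evalB, hv]
  exact (key φ).1 (ht v)

lemma eval_ax_eq_top {φ : Fm} (hax : Ax φ) (𝕄 : AlgModel M) (γ : ℕ → M) :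
    𝕄.eval γ φ = ⊤ := by
  apply eq_top_of_forall_uf
  intro U hU
  cases hax with
  | taut ht => exact eval_taut_mem ht 𝕄 γ hU
  | kRefl ψ =>
      simp only [AlgModel.eval]
      rw [uf_sup_iff hU, uf_compl_iff hU]
      by_cases h : 𝕄.opK (𝕄.eval γ ψ) ∈ U
      · right
        exact ((𝕄.know_bel U hU).2.2.2.2 h).1
      · left; exact h
  | kB ψ =>
      simp only [AlgModel.eval]
      rw [uf_sup_iff hU, uf_compl_iff hU]
      by_cases h : 𝕄.opK (𝕄.eval γ ψ) ∈ U
      · right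
        exact ((𝕄.know_bel U hU).2.2.2.2 h).2
      · left; exact h
  | box4 ψ =>
      simp only [AlgModel.eval]
      by_cases h : 𝕄.eval γ ψ = ⊤
      · rw [h, 𝕄.box_eq_top _ rfl, 𝕄.box_eq_top _ rfl]
        exact (uf_sup_iff hU _ _).2 (Or.inr (uf_top hU))
      · rw [𝕄.box_eq_bot _ h]
        refine (uf_sup_iff hU _ _).2 (Or.inl ?_)
        rw [compl_bot]; exact uf_top hU
  | box5 ψ =>
      simp only [AlgModel.eval]
      by_cases h : 𝕄.eval γ ψ = ⊤
      · rw [𝕄.box_eq_top _ h, compl_top]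
        refine (uf_sup_iff hU _ _).2 (Or.inl ?_)
        rw [compl_bot]; exact uf_top hU
      · rw [𝕄.box_eq_bot _ h, compl_bot, 𝕄.box_eq_top _ rfl]
        exact (uf_sup_iff hU _ _).2 (Or.inr (uf_top hU))
  | boxK ψ =>
      simp only [AlgModel.eval]
      by_cases h : 𝕄.eval γ ψ = ⊤
      · refine (uf_sup_iff hU _ _).2 (Or.inr ?_)
        rw [h]
        obtain ⟨⟨⟨a, haa⟩, hup, _⟩, _, _, _, _⟩ := 𝕄.know_bel U hU
        exact hup a ⊤ haa le_top
      · rw [𝕄.box_eq_bot _ h, compl_bot]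
        exact (uf_sup_iff hU _ _).2 (Or.inl (uf_top hU))
  | kDist ψ χ =>
      simp only [AlgModel.eval]
      rw [uf_sup_iff hU, uf_sup_iff hU, uf_compl_iff hU, uf_compl_iff hU]
      by_cases h1 : 𝕄.opK ((𝕄.eval γ ψ)ᶜ ⊔ 𝕄.eval γ χ) ∈ U
      · by_cases h2 : 𝕄.opK (𝕄.eval γ ψ) ∈ U
        · right; right
          obtain ⟨⟨_, hup, hinf⟩, _, _, _, _⟩ := 𝕄.know_bel U hU
          have := hinf _ _ h1 h2
          refine hup _ _ this ?_
          rw [inf_sup_right]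
          simp
        · right; left; exact h2
      · left; exact h1
  | bDist ψ χ =>
      simp only [AlgModel.eval]
      rw [uf_sup_iff hU, uf_sup_iff hU, uf_compl_iff hU, uf_compl_iff hU]
      by_cases h1 : 𝕄.opB ((𝕄.eval γ ψ)ᶜ ⊔ 𝕄.eval γ χ) ∈ U
      · by_cases h2 : 𝕄.opB (𝕄.eval γ ψ) ∈ U
        · right; right
          obtain ⟨_, _, ⟨_, hup, hinf⟩, _, _⟩ := 𝕄.know_bel U hU
          have := hinf _ _ h1 h2
          refine hup _ _ this ?_
          rw [inf_sup_right]
          simp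
        · right; left; exact h2
      · left; exact h1
  | boxDist ψ χ =>
      simp only [AlgModel.eval]
      by_cases h1 : (𝕄.eval γ ψ)ᶜ ⊔ 𝕄.eval γ χ = ⊤
      · by_cases h2 : 𝕄.eval γ ψ = ⊤
        · have hχ : 𝕄.eval γ χ = ⊤ := by
            rw [h2, compl_top, bot_sup_eq] at h1
            exact h1
          rw [𝕄.box_eq_top _ hχ]
          exact (uf_sup_iff hU _ _).2 (Or.inr ((uf_sup_iff hU _ _).2 (Or.inr (uf_top hU))))
        · rw [𝕄.box_eq_bot _ h2, compl_bot]
          exact (uf_sup_iff hU _ _).2 (Or.inr ((uf_sup_iff hU _ _).2 (Or.inl (uf_top hU))))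
      · rw [𝕄.box_eq_bot _ h1, compl_bot]
        exact (uf_sup_iff hU _ _).2 (Or.inl (uf_top hU))
  | consB =>
      simp only [AlgModel.eval, fmBot, fmTop]
      rw [uf_compl_iff hU]
      have : (𝕄.eval γ (Fm.var 0))ᶜ ⊔ 𝕄.eval γ (Fm.var 0) = ⊤ := by simp
      intro hmem
      obtain ⟨_, _, _, hbotB, _⟩ := 𝕄.know_bel U hU
      apply hbotB
      show 𝕄.opB ⊥ ∈ U
      have heq : ((𝕄.eval γ (Fm.var 0))ᶜ ⊔ 𝕄.eval γ (Fm.var 0))ᶜ = (⊥ : M) := by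
        rw [this, compl_top]
      rw [← heq]
      exact hmem

end Soundness

/-- Soundness of S5BKE w.r.t. algebraic semantics. -/
theorem soundness_algebraic (Φ : Set Fm) (φ : Fm) (h : Deriv Φ φ) : Entails Φ φ := by
  induction h with
  | hyp hmem => exact fun M _ 𝕄 γ hΦ => hΦ _ hmem
  | ax hax =>
      intro M _ 𝕄 γ _
      unfold Sat
      rw [eval_ax_eq_top hax 𝕄 γ]
      exact uf_top 𝕄.true_ultra
  | mp h1 h2 ih1 ih2 =>
      intro M _ 𝕄 γ hΦ
      exact uf_mp 𝕄.true_ultra (ih1 M 𝕄 γ hΦ) (ih2 M 𝕄 γ hΦ)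
  | nec hax =>
      intro M _ 𝕄 γ _
      unfold Sat
      show 𝕄.box _ ∈ 𝕄.TRUE
      rw [eval_ax_eq_top hax 𝕄 γ, 𝕄.box_eq_top _ rfl]
      exact uf_top 𝕄.true_ultra
end

section
/- Completeness of S5BKE with respect to algebraic semantics: for every set of formulas Φ and every formula φ, if Φ ⊨ φ (every algebraic interpretation satisfying Φ satisfies φ), then Φ ⊢ φ in the calculus S5BKE. -/
/-! ### Tautology engine -/

inductive PF : Type
  | var : ℕ → PF
  | neg : PF → PF
  | imp : PF → PF → PF

namespace PF

def toFm (s : ℕ → Fm) : PF → Fm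
  | var n => s n
  | neg p => Fm.neg (toFm s p)
  | imp p q => Fm.imp (toFm s p) (toFm s q)

def evalPF (g : ℕ → Bool) : PF → Bool
  | var n => g n
  | neg p => !evalPF g p
  | imp p q => !evalPF g p || evalPF g q

def maxv : PF → ℕ
  | var n => n + 1
  | neg p => maxv p
  | imp p q => max (maxv p) (maxv q)

lemma evalB_toFm (v : Fm → Bool) (s : ℕ → Fm) (p : PF) :
    evalB v (toFm s p) = evalPF (fun n => evalB v (s n)) p := by
  induction p with
  | var n => rfl
  | neg p ih => simp [toFm, evalPF, evalB, ih]
  | imp p q ihp ihq => simp [toFm, evalPF, evalB, ihp, ihq]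

lemma evalPF_congr {g g' : ℕ → Bool} (p : PF) (h : ∀ n < maxv p, g n = g' n) :
    evalPF g p = evalPF g' p := by
  induction p with
  | var n => exact h n (Nat.lt_succ_self n)
  | neg p ih => simp [evalPF, ih fun n hn => h n hn]
  | imp p q ihp ihq =>
      simp [evalPF, ihp fun n hn => h n (lt_of_lt_of_le hn (le_max_left _ _)),
        ihq fun n hn => h n (lt_of_lt_of_le hn (le_max_right _ _))]

lemma isTaut (p : PF) (s : ℕ → Fm)
    (h : ∀ f : Fin (maxv p) → Bool,
      evalPF (fun n => if hn : n < maxv p then f ⟨n, hn⟩ else false) p = true) :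
    IsTaut (toFm s p) := by
  intro v
  rw [evalB_toFm]
  have := h (fun i => evalB v (s i))
  rw [evalPF_congr p (g' := fun n => evalB v (s n)) ?_] at this
  · exact this
  · intro n hn; simp [hn]

end PF

open PF in
/-- an `Fm`-valued substitution from a list of formulas. -/
def sub (l : List Fm) : ℕ → Fm := fun i => l.getD i (Fm.var 0)

def p0 : PF := PF.var 0
def p1 : PF := PF.var 1
def p2 : PF := PF.var 2
def p3 : PF := PF.var 3
def pT : PF := PF.imp (PF.var 4) (PF.var 4)
def pB : PF := PF.neg pT

infixr:60 " ⟶ " => PF.imp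
prefix:70 "∼" => PF.neg
def pand (p q : PF) : PF := ∼(p ⟶ ∼q)

/-- Main entry point: any substitution instance of a decidable boolean tautology is a taut. -/
lemma taut (p : PF) (l : List Fm)
    (h : ∀ f : Fin (PF.maxv p) → Bool,
      PF.evalPF (fun n => if hn : n < PF.maxv p then f ⟨n, hn⟩ else false) p = true :=
      by decide) :
    IsTaut (PF.toFm (sub l) p) :=
  PF.isTaut p _ h

example (a b : Fm) : Deriv ∅ (Fm.imp a (Fm.imp b a)) :=
  Deriv.ax (Ax.taut (taut (p0 ⟶ p1 ⟶ p0) [a, b]))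

example (a : Fm) : Deriv ∅ (Fm.imp a fmTop) :=
  Deriv.ax (Ax.taut (taut (p0 ⟶ pT) [a]))

example (a : Fm) : Deriv ∅ (Fm.imp fmBot a) :=
  Deriv.ax (Ax.taut (taut (pB ⟶ p0) [a]))

example (a b : Fm) : Deriv ∅ (Fm.imp (fmAnd a b) a) :=
  Deriv.ax (Ax.taut (taut (pand p0 p1 ⟶ p0) [a, b]))
/-! ### Basic derivation lemmas -/



lemma dtaut {Φ : Set Fm} (p : PF) (l : List Fm)
    (h : ∀ f : Fin (PF.maxv p) → Bool,
      PF.evalPF (fun n => if hn : n < PF.maxv p then f ⟨n, hn⟩ else false) p = true :=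
      by decide) :
    Deriv Φ (PF.toFm (sub l) p) :=
  Deriv.ax (Ax.taut (PF.isTaut p _ h))

lemma Deriv.mono {Φ Ψ : Set Fm} {φ : Fm} (h : Deriv Φ φ) (hsub : Φ ⊆ Ψ) : Deriv Ψ φ := by
  induction h with
  | hyp h => exact Deriv.hyp (hsub h)
  | ax h => exact Deriv.ax h
  | mp _ _ ih1 ih2 => exact Deriv.mp ih1 ih2
  | nec h => exact Deriv.nec h

/-- Deduction theorem. -/
lemma deduction {Φ : Set Fm} {ψ χ : Fm} (h : Deriv (insert ψ Φ) χ) :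
    Deriv Φ (Fm.imp ψ χ) := by
  induction h with
  | @hyp φ h =>
      rcases h with h | h
      · rw [h]; exact (dtaut (p0 ⟶ p0) [ψ] : Deriv Φ (Fm.imp ψ ψ))
      · exact Deriv.mp (dtaut (p0 ⟶ p1 ⟶ p0) [φ, ψ]) (Deriv.hyp h)
  | @ax φ h => exact Deriv.mp (dtaut (p0 ⟶ p1 ⟶ p0) [φ, ψ]) (Deriv.ax h)
  | @mp φ χ _ _ ih1 ih2 =>
      exact Deriv.mp (Deriv.mp (dtaut ((p0 ⟶ p1 ⟶ p2) ⟶ (p0 ⟶ p1) ⟶ (p0 ⟶ p2))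
        [ψ, φ, χ]) ih1) ih2
  | @nec φ h => exact Deriv.mp (dtaut (p0 ⟶ p1 ⟶ p0) [Fm.box φ, ψ]) (Deriv.nec h)

/-- Finite character of derivability. -/
lemma Deriv.finite {Φ : Set Fm} {φ : Fm} (h : Deriv Φ φ) :
    ∃ s : Finset Fm, ↑s ⊆ Φ ∧ Deriv ↑s φ := by
  induction h with
  | @hyp φ h =>
      exact ⟨{φ}, by simpa using h, Deriv.hyp (by simp)⟩
  | ax h => exact ⟨∅, by simp, Deriv.ax h⟩
  | @mp φ ψ _ _ ih1 ih2 =>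
      obtain ⟨s1, hs1, hd1⟩ := ih1
      obtain ⟨s2, hs2, hd2⟩ := ih2
      refine ⟨s1 ∪ s2, ?_, Deriv.mp (hd1.mono ?_) (hd2.mono ?_)⟩
      · push_cast; exact Set.union_subset hs1 hs2
      all_goals push_cast; simp [Set.subset_union_left, Set.subset_union_right]
  | nec h => exact ⟨∅, by simp, Deriv.nec h⟩

lemma consistent_insert_neg {Φ : Set Fm} {φ : Fm} (h : ¬ Deriv Φ φ) :
    Consistent (insert (Fm.neg φ) Φ) := by
  intro hbot
  exact h (Deriv.mp (dtaut ((∼p0 ⟶ pB) ⟶ p0) [φ]) (deduction hbot))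

/-- Lindenbaum: every consistent set extends to a maximal consistent set. -/
lemma lindenbaum {Φ : Set Fm} (h : Consistent Φ) :
    ∃ Γ, Φ ⊆ Γ ∧ Consistent Γ ∧ ∀ Δ, Consistent Δ → Γ ⊆ Δ → Γ = Δ := by
  have hZ : ∀ c ⊆ {Δ : Set Fm | Consistent Δ}, IsChain (· ⊆ ·) c → c.Nonempty →
      ∃ ub ∈ {Δ : Set Fm | Consistent Δ}, ∀ s ∈ c, s ⊆ ub := by
    intro c hc hchain hne
    refine ⟨⋃₀ c, ?_, fun s hs => Set.subset_sUnion_of_mem hs⟩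
    intro hbot
    obtain ⟨s, hsub, hd⟩ := hbot.finite
    rw [Set.sUnion_eq_biUnion] at hsub
    obtain ⟨t, htc, hts⟩ := hchain.directedOn.exists_mem_subset_of_finset_subset_biUnion hne hsub
    exact hc htc (hd.mono hts)
  obtain ⟨m, hm, hmax⟩ := zorn_subset_nonempty {Δ : Set Fm | Consistent Δ} hZ Φ h
  exact ⟨m, hm, hmax.1, fun Δ hΔ hsub => (hmax.2 hΔ hsub).antisymm' hsub⟩


/-! ### Maximal consistent sets -/

/-- A convenient packaging of a maximal consistent set. -/
structure MCS where
  Γ : Set Fm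
  cons : Consistent Γ
  maxl : ∀ Δ, Consistent Δ → Γ ⊆ Δ → Γ = Δ

namespace MCS

variable (Γ : MCS)

lemma mem_of_deriv {φ : Fm} (h : Deriv Γ.Γ φ) : φ ∈ Γ.Γ := by
  have hcons : Consistent (insert φ Γ.Γ) := by
    intro hbot
    exact Γ.cons (Deriv.mp (deduction hbot) h)
  have := Γ.maxl _ hcons (Set.subset_insert _ _)
  rw [this]; exact Set.mem_insert _ _

lemma neg_mem_of_not_deriv {φ : Fm} (h : ¬ Deriv Γ.Γ φ) : Fm.neg φ ∈ Γ.Γ := by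
  have hcons := consistent_insert_neg h
  have := Γ.maxl _ hcons (Set.subset_insert _ _)
  rw [this]; exact Set.mem_insert _ _

lemma deriv_or_deriv_neg (φ : Fm) : Deriv Γ.Γ φ ∨ Deriv Γ.Γ (Fm.neg φ) := by
  by_cases h : Deriv Γ.Γ φ
  · exact Or.inl h
  · exact Or.inr (Deriv.hyp (Γ.neg_mem_of_not_deriv h))

lemma not_deriv_neg {φ : Fm} (h : Deriv Γ.Γ φ) : ¬ Deriv Γ.Γ (Fm.neg φ) := by
  intro hn
  exact Γ.cons (Deriv.mp (Deriv.mp (dtaut (p0 ⟶ ∼p0 ⟶ pB) [φ]) h) hn)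

end MCS

/-! ### The `P` modality: boxed derivability -/

section PGamma

variable {Γ : Set Fm}

/-- `P Γ a`: `□a` is derivable from `Γ`. -/
abbrev P (Γ : Set Fm) (a : Fm) : Prop := Deriv Γ (Fm.box a)

lemma Pmp {a b : Fm} (h : P Γ (Fm.imp a b)) (ha : P Γ a) : P Γ b :=
  Deriv.mp (Deriv.mp (Deriv.ax (Ax.boxDist a b)) h) ha

lemma Ptaut (p : PF) (l : List Fm)
    (h : ∀ f : Fin (PF.maxv p) → Bool,
      PF.evalPF (fun n => if hn : n < PF.maxv p then f ⟨n, hn⟩ else false) p = true :=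
      by decide) :
    P Γ (PF.toFm (sub l) p) :=
  Deriv.nec (Ax.taut (PF.isTaut p _ h))

lemma Pmp2 {a b c : Fm} (h : P Γ (Fm.imp a (Fm.imp b c))) (ha : P Γ a) (hb : P Γ b) : P Γ c :=
  Pmp (Pmp h ha) hb

lemma Ptrans {a b c : Fm} (h1 : P Γ (Fm.imp a b)) (h2 : P Γ (Fm.imp b c)) :
    P Γ (Fm.imp a c) :=
  Pmp2 (Ptaut ((p0 ⟶ p1) ⟶ (p1 ⟶ p2) ⟶ (p0 ⟶ p2)) [a, b, c]) h1 h2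

/-- `□a → □□a`, at the `P` level. -/
lemma Pbox {a : Fm} (h : P Γ a) : P Γ (Fm.box a) :=
  Deriv.mp (Deriv.ax (Ax.box4 a)) h

lemma unbox {a : Fm} (h : P Γ a) : Deriv Γ a :=
  Deriv.mp (Deriv.ax (Ax.kRefl a)) (Deriv.mp (Deriv.ax (Ax.boxK a)) h)

/-- from `P (a→b)` conclude `P (Ka → Kb)`. -/
lemma PK {a b : Fm} (h : P Γ (Fm.imp a b)) : P Γ (Fm.imp (Fm.K a) (Fm.K b)) :=
  Pmp (Ptrans (Deriv.nec (Ax.boxK (Fm.imp a b))) (Deriv.nec (Ax.kDist a b))) (Pbox h)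

/-- from `P (a→b)` conclude `P (Ba → Bb)`. -/
lemma PB {a b : Fm} (h : P Γ (Fm.imp a b)) : P Γ (Fm.imp (Fm.B a) (Fm.B b)) :=
  Pmp (Ptrans (Ptrans (Deriv.nec (Ax.boxK (Fm.imp a b))) (Deriv.nec (Ax.kB (Fm.imp a b))))
    (Deriv.nec (Ax.bDist a b))) (Pbox h)

/-- from `P (a→b)` conclude `P (□a → □b)`. -/
lemma Pboximp {a b : Fm} (h : P Γ (Fm.imp a b)) : P Γ (Fm.imp (Fm.box a) (Fm.box b)) :=
  Pmp (a := Fm.box (Fm.imp a b)) (b := Fm.imp (Fm.box a) (Fm.box b))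
    (Deriv.nec (Ax.boxDist a b)) (Pbox h)

end PGamma
/-! ### The Lindenbaum–Tarski algebra modulo boxed equivalence -/

section LTalg

variable {Γ : Set Fm}

/-- Provable boxed equivalence. -/
def REL (Γ : Set Fm) (a b : Fm) : Prop :=
  P Γ (Fm.imp a b) ∧ P Γ (Fm.imp b a)

lemma REL.refl' (a : Fm) : REL Γ a a := ⟨Ptaut (p0 ⟶ p0) [a], Ptaut (p0 ⟶ p0) [a]⟩

lemma REL.symm' {a b : Fm} (h : REL Γ a b) : REL Γ b a := ⟨h.2, h.1⟩

lemma REL.trans' {a b c : Fm} (h1 : REL Γ a b) (h2 : REL Γ b c) : REL Γ a c :=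
  ⟨Ptrans h1.1 h2.1, Ptrans h2.2 h1.2⟩

def fmSetoid (Γ : Set Fm) : Setoid Fm :=
  ⟨REL Γ, fun a => REL.refl' a, REL.symm', REL.trans'⟩

/-- The Lindenbaum–Tarski algebra of `Γ`. -/
abbrev LTA (Γ : Set Fm) : Type := Quotient (fmSetoid Γ)

/-- The class of a formula. -/
def cl (Γ : Set Fm) (a : Fm) : LTA Γ := Quotient.mk (fmSetoid Γ) a

lemma rel_imp {a a' b b' : Fm} (ha : REL Γ a a') (hb : REL Γ b b') :
    REL Γ (Fm.imp a b) (Fm.imp a' b') :=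
  ⟨Pmp2 (Ptaut ((p1 ⟶ p0) ⟶ (p2 ⟶ p3) ⟶ ((p0 ⟶ p2) ⟶ (p1 ⟶ p3))) [a, a', b, b']) ha.2 hb.1,
   Pmp2 (Ptaut ((p1 ⟶ p0) ⟶ (p2 ⟶ p3) ⟶ ((p0 ⟶ p2) ⟶ (p1 ⟶ p3))) [a', a, b', b]) ha.1 hb.2⟩

lemma rel_neg {a b : Fm} (h : REL Γ a b) : REL Γ (Fm.neg a) (Fm.neg b) :=
  ⟨Pmp (Ptaut ((p1 ⟶ p0) ⟶ (∼p0 ⟶ ∼p1)) [a, b]) h.2,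
   Pmp (Ptaut ((p1 ⟶ p0) ⟶ (∼p0 ⟶ ∼p1)) [b, a]) h.1⟩

lemma rel_box {a b : Fm} (h : REL Γ a b) : REL Γ (Fm.box a) (Fm.box b) :=
  ⟨Pboximp h.1, Pboximp h.2⟩

lemma rel_K {a b : Fm} (h : REL Γ a b) : REL Γ (Fm.K a) (Fm.K b) := ⟨PK h.1, PK h.2⟩

lemma rel_B {a b : Fm} (h : REL Γ a b) : REL Γ (Fm.B a) (Fm.B b) := ⟨PB h.1, PB h.2⟩

instance instLELT : LE (LTA Γ) :=
  ⟨Quotient.lift₂ (fun a b => P Γ (Fm.imp a b)) (fun a b a' b' ha hb =>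
    propext ⟨fun h => Pmp (rel_imp ha hb).1 h, fun h => Pmp (rel_imp ha hb).2 h⟩)⟩

lemma le_mk {a b : Fm} : (cl Γ a ≤ cl Γ b) = P Γ (Fm.imp a b) := rfl

/-- disjunction on formulas. -/
def for' (a b : Fm) : Fm := Fm.imp (Fm.neg a) b

instance instSupLT : Max (LTA Γ) :=
  ⟨Quotient.map₂ for' (fun a a' ha b b' hb => rel_imp (rel_neg ha) hb)⟩

instance instInfLT : Min (LTA Γ) :=
  ⟨Quotient.map₂ fmAnd (fun a a' ha b b' hb => rel_neg (rel_imp ha (rel_neg hb)))⟩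

instance instComplLT : Compl (LTA Γ) := ⟨Quotient.map Fm.neg (fun _ _ h => rel_neg h)⟩

instance instTopLT : Top (LTA Γ) := ⟨cl Γ fmTop⟩
instance instBotLT : Bot (LTA Γ) := ⟨cl Γ fmBot⟩

instance instPartialOrderLT : PartialOrder (LTA Γ) where
  le_refl x := Quotient.inductionOn x (fun a => Ptaut (p0 ⟶ p0) [a])
  le_trans x y z := Quotient.inductionOn₃ x y z (fun a b c hab hbc => Ptrans hab hbc)
  le_antisymm x y := Quotient.inductionOn₂ x y
    (fun a b h1 h2 => Quotient.sound ⟨h1, h2⟩)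

instance instLatticeLT : Lattice (LTA Γ) where
  sup := (· ⊔ ·)
  inf := (· ⊓ ·)
  le_sup_left x y := Quotient.inductionOn₂ x y
    (fun a b => Ptaut (p0 ⟶ (∼p0 ⟶ p1)) [a, b])
  le_sup_right x y := Quotient.inductionOn₂ x y
    (fun a b => Ptaut (p1 ⟶ (∼p0 ⟶ p1)) [a, b])
  sup_le x y z := Quotient.inductionOn₃ x y z
    (fun a b c h1 h2 => Pmp2 (Ptaut ((p0 ⟶ p2) ⟶ (p1 ⟶ p2) ⟶ ((∼p0 ⟶ p1) ⟶ p2)) [a, b, c])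
      h1 h2)
  inf_le_left x y := Quotient.inductionOn₂ x y
    (fun a b => Ptaut (pand p0 p1 ⟶ p0) [a, b])
  inf_le_right x y := Quotient.inductionOn₂ x y
    (fun a b => Ptaut (pand p0 p1 ⟶ p1) [a, b])
  le_inf x y z := Quotient.inductionOn₃ x y z
    (fun a b c h1 h2 => Pmp2 (Ptaut ((p0 ⟶ p1) ⟶ (p0 ⟶ p2) ⟶ (p0 ⟶ pand p1 p2)) [a, b, c])
      h1 h2)

instance instDistribLatticeLT : DistribLattice (LTA Γ) where
  le_sup_inf x y z := Quotient.inductionOn₃ x y z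
    (fun a b c => Ptaut (pand (∼p0 ⟶ p1) (∼p0 ⟶ p2) ⟶ (∼p0 ⟶ pand p1 p2)) [a, b, c])

instance instBooleanAlgebraLT : BooleanAlgebra (LTA Γ) where
  compl := (·ᶜ)
  top := ⊤
  bot := ⊥
  le_top x := Quotient.inductionOn x (fun a => Ptaut (p0 ⟶ pT) [a])
  bot_le x := Quotient.inductionOn x (fun a => Ptaut (pB ⟶ p0) [a])
  inf_compl_le_bot x := Quotient.inductionOn x (fun a => Ptaut (pand p0 (∼p0) ⟶ pB) [a])
  top_le_sup_compl x := Quotient.inductionOn x (fun a => Ptaut (pT ⟶ (∼p0 ⟶ ∼p0)) [a])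

end LTalg
/-! ### The canonical algebraic model over a maximal consistent set -/

section Canon

variable (Γ : MCS)

local notation "G" => Γ.Γ

lemma cl_eq_top_iff {a : Fm} : cl G a = ⊤ ↔ P G a := by
  constructor
  · intro h
    have hrel : REL G a fmTop := Quotient.exact h
    exact Pmp hrel.2 (Ptaut pT [])
  · intro h
    exact Quotient.sound ⟨Ptaut (p0 ⟶ pT) [a], Pmp (Ptaut (p0 ⟶ pT ⟶ p0) [a]) h⟩

lemma cl_eq_bot_iff {a : Fm} : cl G a = ⊥ ↔ P G (Fm.neg a) := by
  constructor
  · intro h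
    have hrel : REL G a fmBot := Quotient.exact h
    exact Pmp (Ptaut ((p0 ⟶ pB) ⟶ ∼p0) [a]) hrel.1
  · intro h
    exact Quotient.sound ⟨Pmp (Ptaut (∼p0 ⟶ (p0 ⟶ pB)) [a]) h, Ptaut (pB ⟶ p0) [a]⟩

/-- the distinguished ultrafilter: derivable formulas. -/
def TrueSet : Set (LTA G) :=
  {x | Quotient.lift (fun a => Deriv G a)
    (fun a b (h : REL G a b) => propext ⟨fun d => Deriv.mp (unbox h.1) d, fun d => Deriv.mp (unbox h.2) d⟩) x}

lemma mem_TrueSet {a : Fm} : cl G a ∈ TrueSet Γ ↔ Deriv G a := Iff.rfl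

/-- `P (K ⊤)`. -/
lemma PKtop : P G (Fm.K fmTop) :=
  Pmp (Deriv.nec (Ax.boxK fmTop)) (Pbox (Ptaut pT []))

/-- `P (B ⊤)`. -/
lemma PBtop : P G (Fm.B fmTop) :=
  Pmp (Ptrans (Deriv.nec (Ax.boxK fmTop)) (Deriv.nec (Ax.kB fmTop))) (Pbox (Ptaut pT []))

lemma P_K_and {a b : Fm} :
    P G (Fm.imp (fmAnd (Fm.K a) (Fm.K b)) (Fm.K (fmAnd a b))) := by
  have pt : P G (Fm.imp a (Fm.imp b (fmAnd a b))) := Ptaut (p0 ⟶ p1 ⟶ pand p0 p1) [a, b]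
  have pKt : P G (Fm.K (Fm.imp a (Fm.imp b (fmAnd a b)))) :=
    Pmp (Deriv.nec (Ax.boxK _)) (Pbox pt)
  have h1 : P G (Fm.imp (Fm.K a) (Fm.K (Fm.imp b (fmAnd a b)))) :=
    Pmp (Deriv.nec (Ax.kDist a (Fm.imp b (fmAnd a b)))) pKt
  have h2 : P G (Fm.imp (Fm.K (Fm.imp b (fmAnd a b))) (Fm.imp (Fm.K b) (Fm.K (fmAnd a b)))) :=
    Deriv.nec (Ax.kDist b (fmAnd a b))
  exact Pmp2 (Ptaut ((p0 ⟶ p1) ⟶ (p1 ⟶ (p2 ⟶ p3)) ⟶ (pand p0 p2 ⟶ p3))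
    [Fm.K a, Fm.K (Fm.imp b (fmAnd a b)), Fm.K b, Fm.K (fmAnd a b)]) h1 h2

lemma P_B_and {a b : Fm} :
    P G (Fm.imp (fmAnd (Fm.B a) (Fm.B b)) (Fm.B (fmAnd a b))) := by
  have pt : P G (Fm.imp a (Fm.imp b (fmAnd a b))) := Ptaut (p0 ⟶ p1 ⟶ pand p0 p1) [a, b]
  have pKt : P G (Fm.K (Fm.imp a (Fm.imp b (fmAnd a b)))) :=
    Pmp (Deriv.nec (Ax.boxK _)) (Pbox pt)
  have pBt : P G (Fm.B (Fm.imp a (Fm.imp b (fmAnd a b)))) :=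
    Pmp (Deriv.nec (Ax.kB _)) pKt
  have h1 : P G (Fm.imp (Fm.B a) (Fm.B (Fm.imp b (fmAnd a b)))) :=
    Pmp (Deriv.nec (Ax.bDist a (Fm.imp b (fmAnd a b)))) pBt
  have h2 : P G (Fm.imp (Fm.B (Fm.imp b (fmAnd a b))) (Fm.imp (Fm.B b) (Fm.B (fmAnd a b)))) :=
    Deriv.nec (Ax.bDist b (fmAnd a b))
  exact Pmp2 (Ptaut ((p0 ⟶ p1) ⟶ (p1 ⟶ (p2 ⟶ p3)) ⟶ (pand p0 p2 ⟶ p3))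
    [Fm.B a, Fm.B (Fm.imp b (fmAnd a b)), Fm.B b, Fm.B (fmAnd a b)]) h1 h2

lemma P_neg_Kbot : P G (Fm.neg (Fm.K fmBot)) :=
  Pmp2 (Ptaut ((p0 ⟶ p1) ⟶ ∼p1 ⟶ ∼p0) [Fm.K fmBot, Fm.B fmBot])
    (Deriv.nec (Ax.kB fmBot)) (Deriv.nec Ax.consB)

lemma P_neg_Bbot : P G (Fm.neg (Fm.B fmBot)) := Deriv.nec Ax.consB

/-- The canonical algebraic model. -/
def canonModel : AlgModel (LTA G) where
  box := Quotient.map Fm.box (fun _ _ h => rel_box h)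
  opK := Quotient.map Fm.K (fun _ _ h => rel_K h)
  opB := Quotient.map Fm.B (fun _ _ h => rel_B h)
  TRUE := TrueSet Γ
  true_ultra := by
    refine ⟨⟨⟨⊤, Deriv.ax (Ax.taut (taut pT []))⟩, ?_, ?_⟩, ?_, ?_⟩
    · intro x y
      refine Quotient.inductionOn₂ x y ?_
      intro a b ha hle
      exact Deriv.mp (unbox hle) ha
    · intro x y
      refine Quotient.inductionOn₂ x y ?_
      intro a b ha hb
      exact Deriv.mp (Deriv.mp (dtaut (p0 ⟶ p1 ⟶ pand p0 p1) [a, b]) ha) hb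
    · exact fun hbot => Γ.cons hbot
    · intro x
      refine Quotient.inductionOn x ?_
      intro a
      rcases Γ.deriv_or_deriv_neg a with h | h
      · exact Or.inl h
      · exact Or.inr h
  box_eq_top := by
    intro x
    refine Quotient.inductionOn x ?_
    intro a h
    exact (cl_eq_top_iff Γ).2 (Pbox ((cl_eq_top_iff Γ).1 h))
  box_eq_bot := by
    intro x
    refine Quotient.inductionOn x ?_
    intro a h
    have hnP : ¬ Deriv G (Fm.box a) := fun hP => h ((cl_eq_top_iff Γ).2 hP)
    rcases Γ.deriv_or_deriv_neg (Fm.box a) with hd | hd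
    · exact absurd hd hnP
    · exact (cl_eq_bot_iff Γ).2 (Deriv.mp (Deriv.ax (Ax.box5 a)) hd)
  know_bel := by
    intro U hU
    obtain ⟨⟨⟨w, hw⟩, hup, hmeet⟩, hbot, htotal⟩ := hU
    have htop : (⊤ : LTA G) ∈ U := hup w ⊤ hw le_top
    have hKtop : cl G (Fm.K fmTop) = ⊤ := (cl_eq_top_iff Γ).2 (PKtop Γ)
    have hBtop : cl G (Fm.B fmTop) = ⊤ := (cl_eq_top_iff Γ).2 (PBtop Γ)
    refine ⟨⟨⟨⊤, ?_⟩, ?_, ?_⟩, ?_, ⟨⟨⊤, ?_⟩, ?_, ?_⟩, ?_, ?_⟩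
    · show Quotient.map Fm.K _ ⊤ ∈ U
      show cl G (Fm.K fmTop) ∈ U
      rw [hKtop]; exact htop
    · intro x y
      refine Quotient.inductionOn₂ x y ?_
      intro a b ha hle
      exact hup _ _ ha (PK hle)
    · intro x y
      refine Quotient.inductionOn₂ x y ?_
      intro a b ha hb
      exact hup _ _ (hmeet _ _ ha hb) (P_K_and Γ)
    · show ¬ (Quotient.map Fm.K _ ⊥ ∈ U)
      show cl G (Fm.K fmBot) ∉ U
      rw [(cl_eq_bot_iff Γ).2 (P_neg_Kbot Γ)]
      exact hbot
    · show Quotient.map Fm.B _ ⊤ ∈ U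
      show cl G (Fm.B fmTop) ∈ U
      rw [hBtop]; exact htop
    · intro x y
      refine Quotient.inductionOn₂ x y ?_
      intro a b ha hle
      exact hup _ _ ha (PB hle)
    · intro x y
      refine Quotient.inductionOn₂ x y ?_
      intro a b ha hb
      exact hup _ _ (hmeet _ _ ha hb) (P_B_and Γ)
    · show ¬ (Quotient.map Fm.B _ ⊥ ∈ U)
      show cl G (Fm.B fmBot) ∉ U
      rw [(cl_eq_bot_iff Γ).2 (P_neg_Bbot Γ)]
      exact hbot
    · intro x hx
      refine Quotient.inductionOn x (fun a hx => ?_) hx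
      exact ⟨hup _ _ hx (Deriv.nec (Ax.kRefl a)), hup _ _ hx (Deriv.nec (Ax.kB a))⟩

/-- The canonical assignment. -/
def canonAssign : ℕ → LTA G := fun n => cl G (Fm.var n)

lemma canon_eval (φ : Fm) : (canonModel Γ).eval (canonAssign Γ) φ = cl G φ := by
  induction φ with
  | var n => rfl
  | neg ψ ih => show ((canonModel Γ).eval (canonAssign Γ) ψ)ᶜ = _; rw [ih]; rfl
  | imp ψ χ ih1 ih2 =>
      show ((canonModel Γ).eval (canonAssign Γ) ψ)ᶜ ⊔ (canonModel Γ).eval (canonAssign Γ) χ = _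
      rw [ih1, ih2]
      exact Quotient.sound ⟨Ptaut ((∼∼p0 ⟶ p1) ⟶ (p0 ⟶ p1)) [ψ, χ],
        Ptaut ((p0 ⟶ p1) ⟶ (∼∼p0 ⟶ p1)) [ψ, χ]⟩
  | box ψ ih => show (canonModel Γ).box ((canonModel Γ).eval (canonAssign Γ) ψ) = _
                rw [ih]; rfl
  | K ψ ih => show (canonModel Γ).opK ((canonModel Γ).eval (canonAssign Γ) ψ) = _
              rw [ih]; rfl
  | B ψ ih => show (canonModel Γ).opB ((canonModel Γ).eval (canonAssign Γ) ψ) = _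
              rw [ih]; rfl

end Canon
/-- Completeness of S5BKE w.r.t. algebraic semantics. -/
theorem completeness_algebraic (Φ : Set Fm) (φ : Fm) (h : Entails Φ φ) : Deriv Φ φ := by
  by_contra hnd
  obtain ⟨G, hsub, hcons, hmaxl⟩ := lindenbaum (consistent_insert_neg hnd)
  set Γ : MCS := ⟨G, hcons, hmaxl⟩ with hΓ
  have hsat : ∀ ψ ∈ Φ, Sat (canonModel Γ) (canonAssign Γ) ψ := by
    intro ψ hψ
    show (canonModel Γ).eval (canonAssign Γ) ψ ∈ (canonModel Γ).TRUE
    rw [canon_eval Γ]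
    exact Deriv.hyp (hsub (Set.mem_insert_of_mem _ hψ))
  have hφ : Sat (canonModel Γ) (canonAssign Γ) φ := h (LTA G) (canonModel Γ) (canonAssign Γ) hsat
  have hdφ : Deriv G φ := by
    have := hφ
    rw [Sat, canon_eval Γ] at this
    exact this
  have hdneg : Deriv G (Fm.neg φ) := Deriv.hyp (hsub (Set.mem_insert _ _))
  exact MCS.not_deriv_neg Γ hdφ hdneg
end
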